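/- Suppose λ* > 0 satisfies ‖r + J p(λ*)‖ = q‖r‖ with q ∈ (0,1), r ≠ 0, and p(λ) = -(JᵀJ + λI)⁻¹Jᵀr. Then λ* ≤ (q/(1-q))‖JᵀJ‖ (operator norm). -/

import Mathlib

open Matrix Finset

noncomputable def enorm {n : ℕ} (v : Fin n → ℝ) : ℝ := Real.sqrt (∑ i, v i ^ 2)

noncomputable def specNorm {n : ℕ} (A : Matrix (Fin n) (Fin n) ℝ) : ℝ :=
  sSup ((fun v => _root_.enorm (A.mulVec v)) '' {v | _root_.enorm v ≤ 1})

noncomputable def pstep {n : ℕ} (J : Matrix (Fin n) (Fin n) ℝ) (r : Fin n → ℝ) (lam : ℝ) :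
    Fin n → ℝ :=
  -((Jᵀ * J + lam • (1 : Matrix (Fin n) (Fin n) ℝ))⁻¹.mulVec (Jᵀ.mulVec r))

section Helpers
open RealInnerProductSpace

noncomputable def toE {n : ℕ} (v : Fin n → ℝ) : EuclideanSpace ℝ (Fin n) :=
  (WithLp.equiv 2 _).symm v

lemma enormE {n : ℕ} (v : Fin n → ℝ) : _root_.enorm v = ‖toE v‖ := by
  rw [EuclideanSpace.norm_eq]; simp [toE, _root_.enorm, sq_abs]

lemma enorm_nonneg' {n : ℕ} (v : Fin n → ℝ) : 0 ≤ _root_.enorm v := Real.sqrt_nonneg _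

lemma enorm_eq_zero_fin {n : ℕ} (v : Fin n → ℝ) : _root_.enorm v = 0 ↔ v = 0 := by
  rw [enormE, norm_eq_zero]
  constructor
  · intro h; funext i; exact congrArg (fun w : EuclideanSpace ℝ (Fin n) => w i) h
  · rintro rfl; rfl

lemma enorm_triangle {n : ℕ} (v w : Fin n → ℝ) : _root_.enorm (v + w) ≤ _root_.enorm v + _root_.enorm w := by
  rw [enormE, enormE, enormE]; exact norm_add_le (toE v) (toE w)

lemma enorm_smul_fin {n : ℕ} (c : ℝ) (v : Fin n → ℝ) : _root_.enorm (c • v) = |c| * _root_.enorm v := by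
  rw [enormE, enormE]
  have : toE (c • v) = c • toE v := rfl
  rw [this, norm_smul, Real.norm_eq_abs]

lemma dot_eq_inner {n : ℕ} (v w : Fin n → ℝ) :
    v ⬝ᵥ w = (inner ℝ (toE v) (toE w) : ℝ) := by
  simp [toE, PiLp.inner_apply, dotProduct, mul_comm]

lemma dot_self_eq {n : ℕ} (v : Fin n → ℝ) : v ⬝ᵥ v = _root_.enorm v ^ 2 := by
  rw [dot_eq_inner, enormE, real_inner_self_eq_norm_sq]

lemma dot_CS {n : ℕ} (v w : Fin n → ℝ) : v ⬝ᵥ w ≤ _root_.enorm v * _root_.enorm w := by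
  rw [dot_eq_inner, enormE, enormE]; exact real_inner_le_norm _ _

lemma dotT {n : ℕ} (J : Matrix (Fin n) (Fin n) ℝ) (x w : Fin n → ℝ) :
    x ⬝ᵥ Jᵀ.mulVec w = (J.mulVec x) ⬝ᵥ w := by
  rw [Matrix.dotProduct_mulVec, Matrix.vecMul_transpose]

lemma enorm_frob {n : ℕ} (A : Matrix (Fin n) (Fin n) ℝ) (v : Fin n → ℝ) :
    _root_.enorm (A.mulVec v) ≤ Real.sqrt (∑ i, ∑ j, A i j ^ 2) * _root_.enorm v := by
  simp only [_root_.enorm]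
  rw [← Real.sqrt_mul (by positivity)]
  apply Real.sqrt_le_sqrt
  rw [Finset.sum_mul]
  apply Finset.sum_le_sum
  intro i _
  rw [Matrix.mulVec]
  calc (A i ⬝ᵥ v) ^ 2 ≤ (∑ j, A i j ^ 2) * ∑ j, v j ^ 2 := by
        simpa [dotProduct] using Finset.sum_mul_sq_le_sq_mul_sq Finset.univ (A i) v
    _ = _ := by rfl

lemma specNorm_bddAbove {n : ℕ} (A : Matrix (Fin n) (Fin n) ℝ) :
    BddAbove ((fun v => _root_.enorm (A.mulVec v)) '' {v | _root_.enorm v ≤ 1}) := by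
  refine ⟨Real.sqrt (∑ i, ∑ j, A i j ^ 2), ?_⟩
  rintro x ⟨v, hv, rfl⟩
  calc _root_.enorm (A.mulVec v) ≤ Real.sqrt (∑ i, ∑ j, A i j ^ 2) * _root_.enorm v := enorm_frob A v
    _ ≤ Real.sqrt (∑ i, ∑ j, A i j ^ 2) * 1 :=
        mul_le_mul_of_nonneg_left hv (Real.sqrt_nonneg _)
    _ = _ := mul_one _

lemma specNorm_bound {n : ℕ} (A : Matrix (Fin n) (Fin n) ℝ) (v : Fin n → ℝ) :
    _root_.enorm (A.mulVec v) ≤ specNorm A * _root_.enorm v := by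
  by_cases hv : v = 0
  · subst hv; simp [enorm_eq_zero_fin, Matrix.mulVec_zero,
      (enorm_eq_zero_fin (0 : Fin n → ℝ)).2 rfl]
  · have hv0 : 0 < _root_.enorm v :=
      lt_of_le_of_ne (enorm_nonneg' v) (fun h => hv ((enorm_eq_zero_fin v).1 h.symm))
    set c := _root_.enorm v with hc
    have hu : _root_.enorm ((_root_.enorm v)⁻¹ • v) = 1 := by
      rw [enorm_smul_fin, abs_of_pos (by positivity)]
      exact inv_mul_cancel₀ (ne_of_gt hv0)
    have hmem : _root_.enorm (A.mulVec ((_root_.enorm v)⁻¹ • v)) ∈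
        ((fun v => _root_.enorm (A.mulVec v)) '' {v | _root_.enorm v ≤ 1}) :=
      ⟨(_root_.enorm v)⁻¹ • v, le_of_eq hu, rfl⟩
    have hle := le_csSup (specNorm_bddAbove A) hmem
    rw [Matrix.mulVec_smul, enorm_smul_fin, abs_of_pos (by positivity)] at hle
    calc _root_.enorm (A.mulVec v) = _root_.enorm v * ((_root_.enorm v)⁻¹ * _root_.enorm (A.mulVec v)) := by
          exact (mul_inv_cancel_left₀ (ne_of_gt hv0) _).symm
      _ ≤ _root_.enorm v * specNorm A := mul_le_mul_of_nonneg_left hle (le_of_lt hv0)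
      _ = specNorm A * _root_.enorm v := mul_comm _ _

end Helpers

theorem stmt_9 {n : ℕ} (J : Matrix (Fin n) (Fin n) ℝ) (r : Fin n → ℝ) (hr : r ≠ 0)
    (q : ℝ) (hq : q ∈ Set.Ioo (0 : ℝ) 1)
    (lam : ℝ) (hlam : 0 < lam)
    (hsol : _root_.enorm (r + J.mulVec (pstep J r lam)) = q * _root_.enorm r) :
    lam ≤ q / (1 - q) * specNorm (Jᵀ * J) := by
  obtain ⟨hq0, hq1⟩ := hq
  set B : Matrix (Fin n) (Fin n) ℝ := Jᵀ * J with hB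
  set A : Matrix (Fin n) (Fin n) ℝ := B + lam • 1 with hAdef
  -- quadratic form of A
  have hquad : ∀ x : Fin n → ℝ, x ⬝ᵥ A.mulVec x =
      (J.mulVec x) ⬝ᵥ (J.mulVec x) + lam * (x ⬝ᵥ x) := by
    intro x
    have h1 : A.mulVec x = Jᵀ.mulVec (J.mulVec x) + lam • x := by
      rw [hAdef, Matrix.add_mulVec, Matrix.mulVec_mulVec, Matrix.smul_mulVec,
        Matrix.one_mulVec]
    rw [h1, dotProduct_add, dotT, dotProduct_smul, smul_eq_mul]
  -- A is positive definite
  have hA : A.PosDef := by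
    refine Matrix.PosDef.of_dotProduct_mulVec_pos ?_ ?_
    · show Aᴴ = A
      rw [hAdef, hB, conjTranspose_add, conjTranspose_smul, conjTranspose_one,
        conjTranspose_mul]
      ext i j
      simp [Matrix.conjTranspose_apply, Matrix.mul_apply, Matrix.map_apply]
    · intro x hx
      have hsx : star x = x := by simp
      rw [hsx, hquad]
      have h1 : 0 ≤ (J.mulVec x) ⬝ᵥ (J.mulVec x) := by
        rw [dot_self_eq]; positivity
      have h2 : 0 < x ⬝ᵥ x := by
        rw [dot_self_eq]
        have : _root_.enorm x ≠ 0 := fun h => hx ((enorm_eq_zero_fin x).1 h)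
        have := lt_of_le_of_ne (enorm_nonneg' x) (Ne.symm this)
        positivity
      nlinarith
  have hAdet : IsUnit A.det := isUnit_iff_ne_zero.2 (ne_of_gt hA.det_pos)
  set y : Fin n → ℝ := Jᵀ.mulVec r with hy
  set z : Fin n → ℝ := A⁻¹.mulVec y with hz
  have hAz : A.mulVec z = y := by
    rw [hz, Matrix.mulVec_mulVec, Matrix.mul_nonsing_inv _ hAdet, Matrix.one_mulVec]
  have hp : pstep J r lam = -z := rfl
  have hres : r + J.mulVec (pstep J r lam) = r - J.mulVec z := by
    rw [hp, Matrix.mulVec_neg, sub_eq_add_neg]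
  rw [hres] at hsol
  set a : ℝ := (J.mulVec z) ⬝ᵥ (J.mulVec z) with ha
  set b : ℝ := z ⬝ᵥ z with hbdef
  set c : ℝ := _root_.enorm (J.mulVec z) with hcdef
  set ρ : ℝ := _root_.enorm r with hρdef
  set β : ℝ := specNorm B with hβdef
  have hρ0 : 0 < ρ := by
    have : _root_.enorm r ≠ 0 := fun h => hr ((enorm_eq_zero_fin r).1 h)
    exact lt_of_le_of_ne (enorm_nonneg' r) (Ne.symm this)
  have hb0 : 0 ≤ b := by rw [hbdef, dot_self_eq]; positivity
  have hc0 : 0 ≤ c := enorm_nonneg' _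
  have hc2 : c ^ 2 = a := by rw [hcdef, ha, dot_self_eq]
  -- z ⬝ᵥ y = a + lam * b
  have hzy : z ⬝ᵥ y = a + lam * b := by
    rw [← hAz, hquad z]
  -- z ⬝ᵥ y = (J z) ⬝ᵥ r ≤ c * ρ
  have hzy2 : z ⬝ᵥ y = (J.mulVec z) ⬝ᵥ r := by rw [hy, dotT]
  have hCS : (J.mulVec z) ⬝ᵥ r ≤ c * ρ := dot_CS _ _
  have key1 : a + lam * b ≤ c * ρ := by rw [← hzy, hzy2]; exact hCS
  -- a ≤ β * b
  have key2 : a ≤ β * b := by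
    have h1 : a = z ⬝ᵥ B.mulVec z := by
      rw [ha, hB, ← Matrix.mulVec_mulVec, dotT]
    have h2 : z ⬝ᵥ B.mulVec z ≤ _root_.enorm z * _root_.enorm (B.mulVec z) := dot_CS _ _
    have h3 : _root_.enorm (B.mulVec z) ≤ β * _root_.enorm z := specNorm_bound B z
    have h4 : b = _root_.enorm z ^ 2 := by rw [hbdef, dot_self_eq]
    calc a = z ⬝ᵥ B.mulVec z := h1
      _ ≤ _root_.enorm z * _root_.enorm (B.mulVec z) := h2
      _ ≤ _root_.enorm z * (β * _root_.enorm z) := mul_le_mul_of_nonneg_left h3 (enorm_nonneg' z)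
      _ = β * b := by rw [h4]; ring
  -- triangle: ρ ≤ q * ρ + c
  have key3 : (1 - q) * ρ ≤ c := by
    have h1 : r = (r - J.mulVec z) + J.mulVec z := by ring
    have h2 : ρ ≤ _root_.enorm (r - J.mulVec z) + c := by
      rw [hρdef]; nth_rewrite 1 [h1]; exact enorm_triangle _ _
    rw [hsol] at h2
    nlinarith
  have hcpos : 0 < c := lt_of_lt_of_le (by nlinarith) key3
  have hβpos : 0 < β := by nlinarith
  -- c * (β + lam) ≤ β * ρ
  have key4 : c * (β + lam) ≤ β * ρ := by nlinarith
  -- conclude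
  have key5 : (1 - q) * lam ≤ q * β := by nlinarith
  rw [div_mul_eq_mul_div, le_div_iff₀ (by linarith)]
  nlinarith
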